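/- arXiv:1408.1374 — 3 statements merged into one kernel-verified Lean document; each statement's English description precedes it below -/
import Mathlib

section
/- Let p be a prime, z ∈ ℤ_p, and k ≥ 0 an integer. Then the Haar volume of the set {(x, y) ∈ ℤ_p² : p^k divides xy − z} is at most (k+1) · p^{−k}. -/
open MeasureTheory
open scoped ENNReal

/-- The Borel σ-algebra on the `p`-adic integers. -/
noncomputable instance padicMeasurableSpace (p : ℕ) [Fact p.Prime] :
    MeasurableSpace ℤ_[p] := borel _

instance padicBorelSpace (p : ℕ) [Fact p.Prime] : BorelSpace ℤ_[p] := ⟨rfl⟩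

/-- The Haar measure on `ℤ_p`, normalized so that `vol (ℤ_p) = 1`. -/
noncomputable def padicHaar (p : ℕ) [Fact p.Prime] : Measure ℤ_[p] :=
  Measure.addHaarMeasure
    ⟨⟨Set.univ, isCompact_univ⟩, by rw [interior_univ]; exact Set.univ_nonempty⟩

/-!
Fibre the set over `x`. If `p^j` exactly divides `x` with `j < k`, then `p^k ∣ xy - z` confines `y`
to at most one coset of `p^(k-j) ℤ_p`, of volume `p^(j-k)`; if `p^k ∣ x` the fibre has volume
at most `1 = p^(k-k)`. So the fibre over `x` has volume at most
`∑_{j ≤ k} 1[p^j ∣ x] p^(j-k)`, and since `p^j ℤ_p` has volume `p^(-j)` (its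
`p^j` translates are the fibres of `ℤ_p → ℤ/p^j`), integrating in `x`
gives `k + 1` terms, each equal to `p^(-k)`.
-/

section FiniteQuotient

variable {G F : Type*} [AddGroup G] [MeasurableSpace G] [MeasurableAdd G] {μ : Measure G}
  [μ.IsAddLeftInvariant] [AddGroup F] [Fintype F]

theorem measure_univ_eq_card_mul_measure_ker (f : G →+ F) (hf : Function.Surjective f)
    (hker : MeasurableSet (f ⁻¹' {0})) :
    μ Set.univ = Fintype.card F * μ (f ⁻¹' {0}) := by
  classical
  have hfibre : ∀ c, μ (f ⁻¹' {c}) = μ (f ⁻¹' {0}) ∧ MeasurableSet (f ⁻¹' {c}) := by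
    intro c
    obtain ⟨g, rfl⟩ := hf c
    have htranslate : f ⁻¹' {f g} = (-g + ·) ⁻¹' (f ⁻¹' {0}) := by
      ext y
      simpa [neg_add_eq_zero] using eq_comm
    rw [htranslate]
    exact ⟨measure_preimage_add _ _ _, hker.preimage (measurable_const_add _)⟩
  rw [← Set.preimage_univ (f := f), ← Finset.coe_univ,
    ← sum_measure_preimage_singleton _ fun c _ => (hfibre c).2]
  simp [fun c => (hfibre c).1]

end FiniteQuotient

theorem pow_dvd_of_pow_dvd_mul_of_not_pow_succ_dvd {α : Type*} [CommMonoidWithZero α]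
    [IsCancelMulZero α] {p a b : α} (hp : Prime p) {j k : ℕ} (hab : p ^ k ∣ a * b) (ha : ¬ p ^ (j + 1) ∣ a) :
    p ^ (k - j) ∣ b := by
  rw [pow_dvd_iff_le_emultiplicity, emultiplicity_mul hp] at hab
  rw [pow_dvd_iff_le_emultiplicity, not_le, Nat.cast_add, Nat.cast_one,
    ENat.lt_add_one_iff (ENat.natCast_ne_top j)] at ha
  rw [pow_dvd_iff_le_emultiplicity, ENat.natCast_sub, tsub_le_iff_left]
  exact hab.trans (by gcongr)

namespace PadicInt

variable {p : ℕ} [Fact p.Prime]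

lemma toZModPow_eq_zero_iff (m : ℕ) (x : ℤ_[p]) : toZModPow m x = 0 ↔ (p : ℤ_[p]) ^ m ∣ x := by
  rw [← RingHom.mem_ker, ker_toZModPow, Ideal.mem_span_singleton]

lemma isClosed_setOf_pow_dvd (m : ℕ) : IsClosed {x : ℤ_[p] | (p : ℤ_[p]) ^ m ∣ x} := by
  simp_rw [← Ideal.mem_span_singleton, ← norm_le_pow_iff_mem_span_pow]
  exact isClosed_le continuous_norm continuous_const

end PadicInt

open PadicInt

section PadicHaar

variable {p : ℕ} [Fact p.Prime]

lemma padicHaar_univ : padicHaar p Set.univ = 1 := Measure.addHaarMeasure_self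

instance : IsProbabilityMeasure (padicHaar p) := ⟨padicHaar_univ⟩

instance : (padicHaar p).IsAddLeftInvariant := by unfold padicHaar; infer_instance

lemma padicHaar_setOf_pow_dvd (m : ℕ) :
    padicHaar p {x | (p : ℤ_[p]) ^ m ∣ x} = ((p : ℝ≥0∞) ^ m)⁻¹ := by
  have hker : (toZModPow m : ℤ_[p] →+* ZMod (p ^ m)).toAddMonoidHom ⁻¹' {0} =
      {x | (p : ℤ_[p]) ^ m ∣ x} := by
    ext x
    exact toZModPow_eq_zero_iff m x
  have := measure_univ_eq_card_mul_measure_ker (μ := padicHaar p) _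
    (fun c => ⟨(c.val : ℤ_[p]), by simp⟩) (hker ▸ (isClosed_setOf_pow_dvd m).measurableSet)
  rw [hker, padicHaar_univ, ZMod.card, Nat.cast_pow] at this
  exact ENNReal.eq_inv_of_mul_eq_one_left (by rw [mul_comm, this])

lemma padicHaar_le_of_pow_dvd_sub {s : Set ℤ_[p]} {m : ℕ}
    (hs : ∀ y ∈ s, ∀ y' ∈ s, (p : ℤ_[p]) ^ m ∣ y - y') :
    padicHaar p s ≤ ((p : ℝ≥0∞) ^ m)⁻¹ := by
  rcases s.eq_empty_or_nonempty with rfl | ⟨y₀, hy₀⟩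
  · simp
  calc padicHaar p s ≤ padicHaar p ((-y₀ + ·) ⁻¹' {x | (p : ℤ_[p]) ^ m ∣ x}) :=
        measure_mono fun y hy => by simpa [neg_add_eq_sub] using hs y hy y₀ hy₀
    _ = ((p : ℝ≥0∞) ^ m)⁻¹ := by rw [measure_preimage_add, padicHaar_setOf_pow_dvd]

lemma padicHaar_setOf_pow_dvd_mul_sub_le (k : ℕ) (x z : ℤ_[p]) :
    padicHaar p {y | (p : ℤ_[p]) ^ k ∣ x * y - z} ≤
      ∑ j ∈ Finset.range (k + 1),
        {x' : ℤ_[p] | (p : ℤ_[p]) ^ j ∣ x'}.indicator (fun _ => ((p : ℝ≥0∞) ^ (k - j))⁻¹) x := by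
  classical
  -- `j = min (v_p x) k`
  set j := Nat.findGreatest (fun j => (p : ℤ_[p]) ^ j ∣ x) k
  have hjk : j ≤ k := Nat.findGreatest_le k
  have hxj : x ∈ {x' : ℤ_[p] | (p : ℤ_[p]) ^ j ∣ x'} :=
    Nat.findGreatest_spec (P := fun j => (p : ℤ_[p]) ^ j ∣ x) (Nat.zero_le k) (by simp)
  have hcancel : ∀ w, (p : ℤ_[p]) ^ k ∣ x * w → (p : ℤ_[p]) ^ (k - j) ∣ w := by
    intro w hw
    rcases hjk.eq_or_lt with hjk | hjk
    · simp [hjk]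
    · exact pow_dvd_of_pow_dvd_mul_of_not_pow_succ_dvd prime_p hw
        (Nat.findGreatest_is_greatest (Nat.lt_succ_self j) hjk)
  calc padicHaar p {y | (p : ℤ_[p]) ^ k ∣ x * y - z} ≤ ((p : ℝ≥0∞) ^ (k - j))⁻¹ :=
        padicHaar_le_of_pow_dvd_sub fun y hy y' hy' =>
          hcancel _ (by simpa [mul_sub] using dvd_sub hy hy')
    _ = {x' : ℤ_[p] | (p : ℤ_[p]) ^ j ∣ x'}.indicator
          (fun _ => ((p : ℝ≥0∞) ^ (k - j))⁻¹) x := by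
          rw [Set.indicator_of_mem hxj]
    _ ≤ _ := Finset.single_le_sum (f := fun i => {x' : ℤ_[p] | (p : ℤ_[p]) ^ i ∣ x'}.indicator
          (fun _ => ((p : ℝ≥0∞) ^ (k - i))⁻¹) x) (fun _ _ => zero_le)
          (Finset.mem_range_succ_iff.2 hjk)

end PadicHaar

/-- For a prime `p`, `z ∈ ℤ_p` and `k ≥ 0`, the Haar volume of the set of
`(x, y) ∈ ℤ_p²` with `p^k ∣ x*y - z` is at most `(k+1) p^{-k}`. -/
theorem stmt13 (p : ℕ) [Fact p.Prime] (z : ℤ_[p]) (k : ℕ) :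
    ((padicHaar p).prod (padicHaar p))
      {v : ℤ_[p] × ℤ_[p] | (p : ℤ_[p]) ^ k ∣ v.1 * v.2 - z}
      ≤ ((k : ℝ≥0∞) + 1) * ((p : ℝ≥0∞) ^ k)⁻¹ := by
  have hD : ∀ j, MeasurableSet {x : ℤ_[p] | (p : ℤ_[p]) ^ j ∣ x} :=
    fun j => (isClosed_setOf_pow_dvd j).measurableSet
  have hS : MeasurableSet {v : ℤ_[p] × ℤ_[p] | (p : ℤ_[p]) ^ k ∣ v.1 * v.2 - z} :=
    (hD k).preimage (f := fun v : ℤ_[p] × ℤ_[p] => v.1 * v.2 - z) (by fun_prop)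
  rw [Measure.prod_apply hS]
  calc ∫⁻ x, padicHaar p {y | (p : ℤ_[p]) ^ k ∣ x * y - z} ∂padicHaar p
      ≤ ∫⁻ x, ∑ j ∈ Finset.range (k + 1), {x' : ℤ_[p] | (p : ℤ_[p]) ^ j ∣ x'}.indicator
          (fun _ => ((p : ℝ≥0∞) ^ (k - j))⁻¹) x ∂padicHaar p :=
        lintegral_mono fun x => padicHaar_setOf_pow_dvd_mul_sub_le k x z
    _ = ∑ j ∈ Finset.range (k + 1), ((p : ℝ≥0∞) ^ (k - j))⁻¹ * ((p : ℝ≥0∞) ^ j)⁻¹ := by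
        rw [lintegral_finsetSum _ fun j _ => measurable_const.indicator (hD j)]
        simp only [lintegral_indicator_const (hD _), padicHaar_setOf_pow_dvd]
    _ = ((k : ℝ≥0∞) + 1) * ((p : ℝ≥0∞) ^ k)⁻¹ := by
        rw [Finset.sum_congr rfl fun j hj => by
          rw [← ENNReal.mul_inv (by simp) (by simp), ← pow_add,
            Nat.sub_add_cancel (Finset.mem_range_succ_iff.1 hj)]]
        simp
end

section
/- Let p be a prime, z ∈ ℤ_p, and k ≥ 0 an integer. Then the Haar volume of the set {(x, y) ∈ ℤ_p² : p^k divides x(y − z)} is at most (k+1) · p^{−k}. -/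
open MeasureTheory
open scoped ENNReal

/-!
If `p^k ∣ x (y - z)` then, since `p` is prime in `ℤ_p`, `p^j ∣ x` and `p^(k-j) ∣ y - z` for some
`j ≤ k`. So the set is covered by `k + 1` rectangles, each of volume `p^(-j) p^(-(k-j)) = p^(-k)`:
the ideal `p^n ℤ_p` has index `p^n`, so its Haar volume is `p^(-n)`, as is that of each translate.
-/

section PrimePowDvd

variable {R : Type*} [CommMonoidWithZero R] [IsCancelMulZero R] [DecompositionMonoid R] {q : R}

theorem Prime.exists_pow_dvd_and_pow_dvd_of_pow_dvd_mul (hq : Prime q) {k : ℕ} {a b : R}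
    (h : q ^ k ∣ a * b) : ∃ i ≤ k, q ^ i ∣ a ∧ q ^ (k - i) ∣ b := by
  obtain ⟨d, e, hda, heb, hde⟩ := exists_dvd_and_dvd_of_dvd_mul h
  obtain ⟨i, hik, hdi⟩ := (dvd_prime_pow hq k).1 (hde ▸ dvd_mul_right d e)
  have hei : Associated e (q ^ (k - i)) := by
    refine Associated.of_mul_left ?_ hdi (fun hd ↦ ?_)
    · rw [← pow_add, Nat.add_sub_cancel' hik, ← hde]
    · subst hd
      exact pow_ne_zero k hq.ne_zero (by simpa using hde)
  exact ⟨i, hik, hdi.symm.dvd.trans hda, hei.symm.dvd.trans heb⟩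

end PrimePowDvd

namespace PadicInt

variable (p : ℕ) [Fact p.Prime]

lemma padicHaar_univ : padicHaar p Set.univ = 1 :=
  Measure.addHaarMeasure_self

instance : (padicHaar p).IsAddLeftInvariant := by
  unfold padicHaar; infer_instance

instance : IsProbabilityMeasure (padicHaar p) := ⟨padicHaar_univ p⟩

lemma setOf_pow_dvd_eq_ker (n : ℕ) :
    {x : ℤ_[p] | (p : ℤ_[p]) ^ n ∣ x} =
      ((toZModPow n : ℤ_[p] →+* ZMod (p ^ n)).toAddMonoidHom.ker : Set ℤ_[p]) := by
  ext x
  simp [← Ideal.mem_span_singleton, ← ker_toZModPow]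

lemma index_ker_toZModPow (n : ℕ) :
    (toZModPow n : ℤ_[p] →+* ZMod (p ^ n)).toAddMonoidHom.ker.index = p ^ n := by
  rw [AddSubgroup.index_ker, AddMonoidHom.range_eq_top.2 (ZMod.ringHom_surjective _),
    AddSubgroup.card_top, Nat.card_zmod]

lemma measurableSet_setOf_pow_dvd (n : ℕ) :
    MeasurableSet {x : ℤ_[p] | (p : ℤ_[p]) ^ n ∣ x} := by
  simp only [← Ideal.mem_span_singleton, ← norm_le_pow_iff_mem_span_pow]
  exact (isClosed_le continuous_norm continuous_const).measurableSet

lemma padicHaar_setOf_pow_dvd (n : ℕ) :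
    padicHaar p {x : ℤ_[p] | (p : ℤ_[p]) ^ n ∣ x} = ((p : ℝ≥0∞) ^ n)⁻¹ := by
  have h := AddSubgroup.index_mul_measure _
    (setOf_pow_dvd_eq_ker p n ▸ measurableSet_setOf_pow_dvd p n) (padicHaar p)
  rw [index_ker_toZModPow, padicHaar_univ, ← setOf_pow_dvd_eq_ker] at h
  exact ENNReal.eq_inv_of_mul_eq_one_left (by rw [mul_comm]; exact_mod_cast h)

lemma padicHaar_setOf_pow_dvd_sub (z : ℤ_[p]) (n : ℕ) :
    padicHaar p {y : ℤ_[p] | (p : ℤ_[p]) ^ n ∣ y - z} = ((p : ℝ≥0∞) ^ n)⁻¹ := by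
  rw [← padicHaar_setOf_pow_dvd p n,
    ← measure_preimage_add _ (-z) {x : ℤ_[p] | (p : ℤ_[p]) ^ n ∣ x}]
  congr 1 with y
  simp [neg_add_eq_sub]

variable {p}

lemma setOf_pow_dvd_mul_sub_subset (z : ℤ_[p]) (k : ℕ) :
    {v : ℤ_[p] × ℤ_[p] | (p : ℤ_[p]) ^ k ∣ v.1 * (v.2 - z)} ⊆
      ⋃ j ∈ Finset.range (k + 1),
        {x : ℤ_[p] | (p : ℤ_[p]) ^ j ∣ x} ×ˢ {y : ℤ_[p] | (p : ℤ_[p]) ^ (k - j) ∣ y - z} := by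
  intro v hv
  obtain ⟨j, hjk, hx, hy⟩ := prime_p.exists_pow_dvd_and_pow_dvd_of_pow_dvd_mul hv
  exact Set.mem_biUnion (Finset.mem_range_succ_iff.2 hjk) ⟨hx, hy⟩

lemma padicHaar_prod_setOf_pow_dvd_prod_setOf_pow_dvd_sub (z : ℤ_[p]) {j k : ℕ} (hjk : j ≤ k) :
    ((padicHaar p).prod (padicHaar p))
      ({x : ℤ_[p] | (p : ℤ_[p]) ^ j ∣ x} ×ˢ {y : ℤ_[p] | (p : ℤ_[p]) ^ (k - j) ∣ y - z}) =
      ((p : ℝ≥0∞) ^ k)⁻¹ := by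
  rw [Measure.prod_prod, padicHaar_setOf_pow_dvd, padicHaar_setOf_pow_dvd_sub, ENNReal.inv_pow,
    ENNReal.inv_pow, ENNReal.inv_pow, ← pow_add, Nat.add_sub_cancel' hjk]

end PadicInt

/-- For a prime `p`, `z ∈ ℤ_p` and `k ≥ 0`, the Haar volume of the set of
`(x, y) ∈ ℤ_p²` with `p^k ∣ x*(y - z)` is at most `(k+1) p^{-k}`. -/
theorem stmt14 (p : ℕ) [Fact p.Prime] (z : ℤ_[p]) (k : ℕ) :
    ((padicHaar p).prod (padicHaar p))
      {v : ℤ_[p] × ℤ_[p] | (p : ℤ_[p]) ^ k ∣ v.1 * (v.2 - z)}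
      ≤ ((k : ℝ≥0∞) + 1) * ((p : ℝ≥0∞) ^ k)⁻¹ := by
  calc _ ≤ ∑ j ∈ Finset.range (k + 1), ((padicHaar p).prod (padicHaar p))
          ({x : ℤ_[p] | (p : ℤ_[p]) ^ j ∣ x} ×ˢ {y : ℤ_[p] | (p : ℤ_[p]) ^ (k - j) ∣ y - z}) :=
        (measure_mono (PadicInt.setOf_pow_dvd_mul_sub_subset z k)).trans
          (measure_biUnion_finset_le _ _)
    _ = ∑ _j ∈ Finset.range (k + 1), ((p : ℝ≥0∞) ^ k)⁻¹ :=
        Finset.sum_congr rfl fun _j hj ↦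
          PadicInt.padicHaar_prod_setOf_pow_dvd_prod_setOf_pow_dvd_sub z
            (Finset.mem_range_succ_iff.1 hj)
    _ = ((k : ℝ≥0∞) + 1) * ((p : ℝ≥0∞) ^ k)⁻¹ := by
        rw [Finset.sum_const, Finset.card_range, nsmul_eq_mul, Nat.cast_succ]
end

section
/- Let p be a prime and let x₁₁, x₂₁, x₂₂ ∈ ℤ_p with x₁₁ ≠ 0 and x₂₂ ≠ 0. Then the ℤ_p-submodule of ℤ_p² spanned by the vectors v₁ = (x₁₁, 0) and v₂ = (x₂₁, x₂₂) is closed under the componentwise product of ℤ_p² if and only if x₁₁ divides x₂₁(x₂₁ − x₂₂) in ℤ_p. -/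
/-!
A submodule spanned by a set `s` is closed under multiplication as soon as the products of
elements of `s` lie in it. For `v₁ = (a, 0)` and `v₂ = (b, d)` the products `v₁ v₁ = a • v₁` and
`v₁ v₂ = b • v₁` always do, and `v₂ v₂ = (b², d²) = r • v₁ + t • v₂` forces `t = d` (as `d ≠ 0`),
leaving `b² - b d = r a`.
-/

open Submodule

theorem Submodule.mul_mem_span_iff {R A : Type*} [CommSemiring R] [Semiring A] [Algebra R A]
    (s : Set A) :
    (∀ u ∈ span R s, ∀ w ∈ span R s, u * w ∈ span R s) ↔ ∀ x ∈ s, ∀ y ∈ s, x * y ∈ span R s := by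
  rw [← mul_le, span_mul_span, span_le, Set.mul_subset_iff]
  rfl

section Pair

variable {R : Type*} [CommRing R]

theorem Prod.mul_mem_span_pair_iff_mul_self (a b d : R) :
    (∀ x ∈ ({(a, 0), (b, d)} : Set (R × R)), ∀ y ∈ ({(a, 0), (b, d)} : Set (R × R)),
      x * y ∈ span R ({(a, 0), (b, d)} : Set (R × R))) ↔
      (b, d) * (b, d) ∈ span R ({(a, 0), (b, d)} : Set (R × R)) := by
  have hv : ((a, 0) : R × R) ∈ span R {(a, 0), (b, d)} := subset_span (by simp)
  have hsq : ((a, 0) : R × R) * (a, 0) = a • (a, 0) := by ext <;> simp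
  have hmul : ((a, 0) : R × R) * (b, d) = b • (a, 0) := by ext <;> simp [mul_comm]
  simp only [Set.mem_insert_iff, Set.mem_singleton_iff, forall_eq_or_imp, forall_eq,
    mul_comm (b, d) (a, 0), hsq, hmul, smul_mem _ _ hv, true_and]

theorem Prod.mul_self_mem_span_pair_iff [NoZeroDivisors R] (a b d : R) (hd : d ≠ 0) :
    (b, d) * (b, d) ∈ span R ({(a, 0), (b, d)} : Set (R × R)) ↔ a ∣ b * (b - d) := by
  rw [mem_span_pair]
  constructor
  · rintro ⟨r, t, h⟩
    simp only [Prod.ext_iff, Prod.fst_add, Prod.snd_add, Prod.smul_fst, Prod.smul_snd,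
      Prod.fst_mul, Prod.snd_mul, smul_eq_mul, mul_zero, zero_add] at h
    obtain rfl : t = d := mul_right_cancel₀ hd h.2
    exact ⟨r, by linear_combination -h.1⟩
  · rintro ⟨r, hr⟩
    exact ⟨r, d, by ext <;> simp; linear_combination -hr⟩

end Pair

theorem stmt17_general (p : ℕ) [Fact p.Prime] (x11 x21 x22 : ℤ_[p])
    (h22 : x22 ≠ 0) :
    (∀ u ∈ Submodule.span ℤ_[p] ({(x11, 0), (x21, x22)} : Set (ℤ_[p] × ℤ_[p])),
      ∀ w ∈ Submodule.span ℤ_[p] ({(x11, 0), (x21, x22)} : Set (ℤ_[p] × ℤ_[p])),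
        u * w ∈ Submodule.span ℤ_[p] ({(x11, 0), (x21, x22)} : Set (ℤ_[p] × ℤ_[p])))
    ↔ x11 ∣ x21 * (x21 - x22) := by
  rw [Submodule.mul_mem_span_iff, Prod.mul_mem_span_pair_iff_mul_self,
    Prod.mul_self_mem_span_pair_iff x11 x21 x22 h22]

/-- Let `p` be a prime and `x₁₁, x₂₁, x₂₂ ∈ ℤ_p` with `x₁₁ ≠ 0` and `x₂₂ ≠ 0`.  The
`ℤ_p`-submodule of `ℤ_p²` spanned by `(x₁₁, 0)` and `(x₂₁, x₂₂)` is closed under the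
componentwise product if and only if `x₁₁ ∣ x₂₁ (x₂₁ - x₂₂)` in `ℤ_p`. -/
theorem stmt17 (p : ℕ) [Fact p.Prime] (x11 x21 x22 : ℤ_[p])
    (h11 : x11 ≠ 0) (h22 : x22 ≠ 0) :
    (∀ u ∈ Submodule.span ℤ_[p] ({(x11, 0), (x21, x22)} : Set (ℤ_[p] × ℤ_[p])),
      ∀ w ∈ Submodule.span ℤ_[p] ({(x11, 0), (x21, x22)} : Set (ℤ_[p] × ℤ_[p])),
        u * w ∈ Submodule.span ℤ_[p] ({(x11, 0), (x21, x22)} : Set (ℤ_[p] × ℤ_[p])))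
    ↔ x11 ∣ x21 * (x21 - x22) :=
  stmt17_general p x11 x21 x22 h22
end
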